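/- Let G and H be connected non-trivial graphs with H not complete. If tn(G ∘ H) = 3 · tn(G), then tn(H) > 2. -/

import Mathlib

open SimpleGraph

/-- A walk `W` between `u` and `v` is a *tolled walk* if either `u = v` and `W` is trivial,
or `u` and `v` are adjacent and `W` is the single-edge walk, or `u ≠ v` are non-adjacent,
`W` has at least one interior vertex, `u` is adjacent exactly to the interior vertex
at position 1 and `v` exactly to the interior vertex at position `W.length - 1`. -/
def IsTolledWalk {V : Type*} (G : SimpleGraph V) {u v : V} (W : G.Walk u v) : Prop :=
  (u = v ∧ W.length = 0) ∨
  (G.Adj u v ∧ W.support = [u, v]) ∨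
  (¬ G.Adj u v ∧ u ≠ v ∧ 2 ≤ W.length ∧
    (∀ i, 0 < i → i < W.length → (G.Adj u (W.support.getD i u) ↔ i = 1)) ∧
    (∀ i, 0 < i → i < W.length → (G.Adj v (W.support.getD i u) ↔ i = W.length - 1)))

/-- The toll interval between `u` and `v`: vertices lying on some tolled walk. -/
def tollInterval {V : Type*} (G : SimpleGraph V) (u v : V) : Set V :=
  {x | ∃ W : G.Walk u v, IsTolledWalk G W ∧ x ∈ W.support}

/-- A toll set: the toll intervals between its pairs cover the vertex set. -/
def IsTollSet {V : Type*} (G : SimpleGraph V) (S : Set V) : Prop :=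
  ∀ x : V, ∃ u ∈ S, ∃ v ∈ S, x ∈ tollInterval G u v

/-- The toll number: minimum size of a toll set. -/
noncomputable def tollNumber {V : Type*} (G : SimpleGraph V) : ℕ :=
  sInf {n | ∃ S : Set V, S.Finite ∧ S.ncard = n ∧ IsTollSet G S}

/-- `v` is a cut vertex if deleting it disconnects the graph. -/
def IsCutVertex {V : Type*} (G : SimpleGraph V) (v : V) : Prop :=
  ¬ (G.induce {w | w ≠ v}).Preconnected

/-- The extreme vertices of `G` with respect to toll convexity. -/
def extremeVertices {V : Type*} (G : SimpleGraph V) : Set V :=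
  {s | ∀ x y : V, x ≠ s → y ≠ s → s ∉ tollInterval G x y}

/-- The lexicographic product of simple graphs. -/
def lexProd {V W : Type*} (G : SimpleGraph V) (H : SimpleGraph W) : SimpleGraph (V × W) where
  Adj a b := G.Adj a.1 b.1 ∨ (a.1 = b.1 ∧ H.Adj a.2 b.2)
  symm := by
    constructor
    rintro a b (h | ⟨h1, h2⟩)
    · exact Or.inl h.symm
    · exact Or.inr ⟨h1.symm, h2.symm⟩
  loopless := by
    constructor
    rintro a (h | ⟨_, h⟩)
    · exact G.ne_of_adj h rfl
    · exact H.ne_of_adj h rfl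

/-!
Graph embeddings carry tolled walks to tolled walks, and in `G ∘ H` every layer `{g} × H` is an
induced copy of `H`, and the graph `{(a, c a)}` of any map `c : V → W` an induced copy of `G`.
If `S`, `T` are toll sets of `G`, `H`, then `S × T` is one of `G ∘ H`: a vertex `(g, h)` with
`g ∈ S` lies on a tolled walk of its layer, and one with `g ∉ S` lies on the lift of a tolled walk
of `G` between `u, v ∈ S` along the graph of the map that is `h` at `g` and some `t ∈ T` elsewhere.
So `tn(G ∘ H) ≤ tn(G) · tn(H)`, and as `tn(G) > 0`, `tn(G ∘ H) = 3 · tn(G)` forces `tn(H) ≥ 3`.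
-/

lemma SimpleGraph.Walk.support_getD_eq_getVert {V : Type*} {G : SimpleGraph V} {u v : V}
    (p : G.Walk u v) {n : ℕ} (hn : n ≤ p.length) (d : V) :
    p.support.getD n d = p.getVert n := by
  rw [List.getD_eq_getElem _ _ (by rw [Walk.length_support]; omega),
    Walk.support_getElem_eq_getVert]

section Toll

variable {V V' : Type*} {G : SimpleGraph V} {G' : SimpleGraph V'}

lemma IsTolledWalk.map (f : G ↪g G') {u v : V} {p : G.Walk u v} (hp : IsTolledWalk G p) :
    IsTolledWalk G' (p.map f.toHom) := by
  have getD_map : ∀ i ≤ p.length, (p.map f.toHom).support.getD i (f.toHom u) =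
      f (p.support.getD i u) := fun i hi => by
    rw [Walk.support_getD_eq_getVert _ (by simpa using hi), Walk.getVert_map,
      Walk.support_getD_eq_getVert _ hi]
    rfl
  rcases hp with ⟨rfl, hlen⟩ | ⟨hadj, hsupp⟩ | ⟨hnadj, hne, hlen, hu, hv⟩
  · exact Or.inl ⟨rfl, by simpa using hlen⟩
  · exact Or.inr <| Or.inl ⟨f.map_adj_iff.mpr hadj, by simp [Walk.support_map, hsupp]⟩
  · refine Or.inr <| Or.inr ⟨mt f.map_adj_iff.mp hnadj, f.injective.ne hne,
      by simpa using hlen, fun i hi0 hi => ?_, fun i hi0 hi => ?_⟩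
    · rw [Walk.length_map] at hi
      simpa [getD_map i hi.le] using hu i hi0 hi
    · rw [Walk.length_map] at hi ⊢
      simpa [getD_map i hi.le] using hv i hi0 hi

lemma map_mem_tollInterval (f : G ↪g G') {u v x : V} (hx : x ∈ tollInterval G u v) :
    f x ∈ tollInterval G' (f u) (f v) := by
  obtain ⟨p, hp, hxp⟩ := hx
  exact ⟨p.map f.toHom, hp.map f, by
    rw [Walk.support_map]; exact List.mem_map_of_mem hxp⟩

lemma isTollSet_univ (G : SimpleGraph V) : IsTollSet G Set.univ :=
  fun x => ⟨x, trivial, x, trivial, Walk.nil, Or.inl ⟨rfl, rfl⟩, by simp⟩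

lemma exists_isTollSet_ncard_eq_tollNumber [Finite V] (G : SimpleGraph V) :
    ∃ S : Set V, S.Finite ∧ S.ncard = tollNumber G ∧ IsTollSet G S :=
  Nat.sInf_mem (s := {n | ∃ S : Set V, S.Finite ∧ S.ncard = n ∧ IsTollSet G S})
    ⟨_, Set.univ, Set.toFinite _, rfl, isTollSet_univ G⟩

lemma tollNumber_le_ncard [Finite V] {S : Set V} (hS : IsTollSet G S) :
    tollNumber G ≤ S.ncard :=
  Nat.sInf_le ⟨S, S.toFinite, rfl, hS⟩

lemma tollNumber_pos [Finite V] [Nonempty V] (G : SimpleGraph V) : 0 < tollNumber G := by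
  obtain ⟨S, hSfin, hScard, hS⟩ := exists_isTollSet_ncard_eq_tollNumber G
  obtain ⟨u, hu, -⟩ := hS (Classical.arbitrary V)
  exact hScard ▸ (Set.ncard_pos hSfin).mpr ⟨u, hu⟩

end Toll

namespace lexProd

variable {V W : Type*} {G : SimpleGraph V} {H : SimpleGraph W}

def layer (G : SimpleGraph V) (H : SimpleGraph W) (g : V) : H ↪g lexProd G H where
  toFun h := (g, h)
  inj' _ _ h := congrArg Prod.snd h
  map_rel_iff' {a b} := show G.Adj g g ∨ (g = g ∧ H.Adj a b) ↔ H.Adj a b by simp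

def graphOf (G : SimpleGraph V) (H : SimpleGraph W) (c : V → W) : G ↪g lexProd G H where
  toFun a := (a, c a)
  inj' _ _ h := congrArg Prod.fst h
  map_rel_iff' {a b} := show G.Adj a b ∨ (a = b ∧ H.Adj (c a) (c b)) ↔ G.Adj a b by
    refine or_iff_left_of_imp ?_
    rintro ⟨rfl, h⟩
    exact absurd h H.irrefl

@[simp] lemma graphOf_apply (c : V → W) (a : V) : graphOf G H c a = (a, c a) := rfl

lemma isTollSet_prod {S : Set V} {T : Set W} (hS : IsTollSet G S) (hT : IsTollSet H T) :
    IsTollSet (lexProd G H) (S ×ˢ T) := by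
  classical
  rintro ⟨g, h⟩
  by_cases hg : g ∈ S
  · obtain ⟨x, hx, y, hy, hmem⟩ := hT h
    exact ⟨(g, x), ⟨hg, hx⟩, (g, y), ⟨hg, hy⟩, map_mem_tollInterval (layer G H g) hmem⟩
  · obtain ⟨u, hu, v, hv, hmem⟩ := hS g
    obtain ⟨t, ht, -⟩ := hT h
    have hgu : u ≠ g := fun h => hg (h ▸ hu)
    have hgv : v ≠ g := fun h => hg (h ▸ hv)
    have := map_mem_tollInterval (graphOf G H (Function.update (fun _ => t) g h)) hmem
    simp only [graphOf_apply, Function.update_self, Function.update_of_ne hgu,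
      Function.update_of_ne hgv] at this
    exact ⟨(u, t), ⟨hu, ht⟩, (v, t), ⟨hv, ht⟩, this⟩

end lexProd

lemma tollNumber_lexProd_le {V W : Type*} [Finite V] [Finite W]
    (G : SimpleGraph V) (H : SimpleGraph W) :
    tollNumber (lexProd G H) ≤ tollNumber G * tollNumber H := by
  obtain ⟨S, -, hScard, hS⟩ := exists_isTollSet_ncard_eq_tollNumber G
  obtain ⟨T, -, hTcard, hT⟩ := exists_isTollSet_ncard_eq_tollNumber H
  calc tollNumber (lexProd G H) ≤ (S ×ˢ T).ncard :=
        tollNumber_le_ncard (lexProd.isTollSet_prod hS hT)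
    _ = tollNumber G * tollNumber H := by rw [Set.ncard_prod, hScard, hTcard]

theorem stmt17_general {V W : Type*} [Fintype V] [Fintype W] [Nontrivial V]
    (G : SimpleGraph V) (H : SimpleGraph W)
    (heq : tollNumber (lexProd G H) = 3 * tollNumber G) :
    2 < tollNumber H := by
  have hpos := tollNumber_pos G
  have hle : tollNumber G * 3 ≤ tollNumber G * tollNumber H := by
    rw [mul_comm, ← heq]
    exact tollNumber_lexProd_le G H
  exact Nat.le_of_mul_le_mul_left hle hpos

theorem stmt17 {V W : Type*} [Fintype V] [Fintype W] [Nontrivial V] [Nontrivial W]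
    (G : SimpleGraph V) (H : SimpleGraph W)
    (hGc : G.Connected) (hHc : H.Connected) (hH : H ≠ ⊤)
    (heq : tollNumber (lexProd G H) = 3 * tollNumber G) :
    2 < tollNumber H :=
  stmt17_general G H heq
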